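/- Fix integers n ≥ 1 and N ≥ 0. Then lim_{k→∞} F_D(n;k,N) = F_P(n;N): as the alphabet size k tends to infinity, the probability that a uniform random word of length N on k letters has longest strictly decreasing subsequence of length at most n converges to the probability that a uniform random permutation of {1,…,N} has longest increasing subsequence of length at most n. -/

import Mathlib

open scoped BigOperators Topology

/-- The length of the longest strictly decreasing subsequence of the word `w`. -/
noncomputable def decLen {N k : ℕ} (w : Fin N → Fin k) : ℕ :=
  sSup {m | ∃ f : Fin m → Fin N, StrictMono f ∧ StrictAnti (w ∘ f)}

/-- `F_D(n;k,N)`: the probability that a uniform random word of length `N` on `k`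
letters has longest strictly decreasing subsequence of length at most `n`. -/
noncomputable def FD (n k N : ℕ) : ℝ :=
  (Nat.card {w : Fin N → Fin k // decLen w ≤ n} : ℝ) / (k : ℝ) ^ N

/-- The length of the longest increasing subsequence of the permutation `σ`. -/
noncomputable def permIncLen {N : ℕ} (σ : Equiv.Perm (Fin N)) : ℕ :=
  sSup {m | ∃ f : Fin m → Fin N, StrictMono f ∧ StrictMono (σ ∘ f)}

/-- `F_P(n;N)`: the probability that a uniform random permutation of `N` letters
has longest increasing subsequence of length at most `n`. -/
noncomputable def FP (n N : ℕ) : ℝ :=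
  (Nat.card {σ : Equiv.Perm (Fin N) // permIncLen σ ≤ n} : ℝ) /
    (Nat.factorial N : ℝ)

/-
An injective word `w : Fin N → Fin k` factors uniquely as the increasing enumeration of its set of
letters (one of `k.choose N` sets) after `Fin.rev ∘ σ` for a permutation `σ`, and the decreasing
subsequences of `w` are the increasing subsequences of `σ`. Hence the injective words with
`decLen w ≤ n` make up the fraction `F_P(n;N) · k.descFactorial N / k ^ N` of all words, and the
remaining words at most the fraction `1 - k.descFactorial N / k ^ N`; since
`k.descFactorial N ~ k ^ N`, these tend to `F_P(n;N)` and `0`.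
-/

open Filter

lemma decLen_comp_of_strictMono {N k l : ℕ} {g : Fin k → Fin l} (hg : StrictMono g)
    (w : Fin N → Fin k) : decLen (g ∘ w) = decLen w := by
  unfold decLen
  congr 1
  ext m
  refine exists_congr fun f => and_congr_right fun _ => ?_
  exact ⟨fun h _ _ hab => hg.lt_iff_lt.mp (h hab), hg.comp_strictAnti⟩

lemma decLen_rev_comp {N : ℕ} (σ : Equiv.Perm (Fin N)) :
    decLen (Fin.rev ∘ σ) = permIncLen σ := by
  unfold decLen permIncLen
  congr 1
  ext m
  refine exists_congr fun f => and_congr_right fun _ => ?_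
  exact ⟨fun h _ _ hab => Fin.rev_lt_rev.mp (h hab), fun h _ _ hab => Fin.rev_lt_rev.mpr (h hab)⟩

section PatternWord

variable {N k : ℕ}

noncomputable def patternWord (p : Equiv.Perm (Fin N) × {s : Finset (Fin k) // s.card = N}) :
    {w : Fin N → Fin k // Function.Injective w} :=
  ⟨p.2.1.orderEmbOfFin p.2.2 ∘ Fin.rev ∘ p.1,
    (p.2.1.orderEmbOfFin p.2.2).injective.comp (Fin.rev_injective.comp p.1.injective)⟩

lemma decLen_patternWord (p : Equiv.Perm (Fin N) × {s : Finset (Fin k) // s.card = N}) :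
    decLen (patternWord p).1 = permIncLen p.1 := by
  rw [patternWord, decLen_comp_of_strictMono (p.2.1.orderEmbOfFin p.2.2).strictMono,
    decLen_rev_comp]

lemma range_patternWord (p : Equiv.Perm (Fin N) × {s : Finset (Fin k) // s.card = N}) :
    Set.range (patternWord p).1 = p.2.1 := by
  rw [patternWord, (Fin.rev_surjective.comp p.1.surjective).range_comp,
    Finset.range_orderEmbOfFin]

lemma patternWord_injective : Function.Injective (patternWord (N := N) (k := k)) := by
  rintro ⟨σ, s, hs⟩ ⟨τ, t, ht⟩ h
  have hst : s = t := Finset.coe_injective <| by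
    simpa only [range_patternWord] using congrArg (fun w => Set.range w.1) h
  subst hst
  have hστ : σ = τ := Equiv.ext fun i =>
    Fin.rev_injective ((s.orderEmbOfFin hs).injective (congrFun (congrArg Subtype.val h) i))
  rw [hστ]

lemma card_injective_fun :
    Fintype.card {w : Fin N → Fin k // Function.Injective w} = k.descFactorial N := by
  rw [Fintype.card_congr (Equiv.subtypeInjectiveEquivEmbedding _ _), Fintype.card_embedding_eq,
    Fintype.card_fin, Fintype.card_fin]

lemma patternWord_bijective : Function.Bijective (patternWord (N := N) (k := k)) := by
  refine (Fintype.bijective_iff_injective_and_card _).mpr ⟨patternWord_injective, ?_⟩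
  rw [card_injective_fun, Fintype.card_prod, Fintype.card_perm, Fintype.card_finset_len,
    Fintype.card_fin, Fintype.card_fin, Nat.descFactorial_eq_factorial_mul_choose]

lemma card_injective_decLen_le (n : ℕ) :
    Nat.card {w : Fin N → Fin k // Function.Injective w ∧ decLen w ≤ n} =
      Nat.card {σ : Equiv.Perm (Fin N) // permIncLen σ ≤ n} * k.choose N := by
  have e := calc
    {w : Fin N → Fin k // Function.Injective w ∧ decLen w ≤ n}
      ≃ {w : {w : Fin N → Fin k // Function.Injective w} // decLen w.1 ≤ n} :=
        (Equiv.subtypeSubtypeEquivSubtypeInter _ _).symm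
    _ ≃ {p : Equiv.Perm (Fin N) × {s : Finset (Fin k) // s.card = N} // permIncLen p.1 ≤ n} :=
        ((Equiv.ofBijective _ patternWord_bijective).subtypeEquiv
          fun p => by rw [Equiv.ofBijective_apply, decLen_patternWord]).symm
    _ ≃ {σ : Equiv.Perm (Fin N) // permIncLen σ ≤ n} × {s : Finset (Fin k) // s.card = N} :=
        Equiv.prodSubtypeFstEquivSubtypeProd (p := fun σ => permIncLen σ ≤ n)
  rw [Nat.card_congr e, Nat.card_prod, Nat.card_eq_fintype_card (α := {s : Finset _ // _}),
    Fintype.card_finset_len, Fintype.card_fin]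

end PatternWord

lemma card_decLen_le (n N k : ℕ) :
    Nat.card {w : Fin N → Fin k // decLen w ≤ n} =
      Nat.card {w : Fin N → Fin k // Function.Injective w ∧ decLen w ≤ n} +
        Nat.card {w : Fin N → Fin k // ¬ Function.Injective w ∧ decLen w ≤ n} := by
  classical
  simp only [Nat.card_eq_fintype_card, Fintype.card_subtype]
  rw [← Finset.card_filter_add_card_filter_not Function.Injective, Finset.filter_filter,
    Finset.filter_filter]
  simp only [and_comm]

lemma card_not_injective_add_descFactorial (N k : ℕ) :
    Nat.card {w : Fin N → Fin k // ¬ Function.Injective w} + k.descFactorial N = k ^ N := by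
  classical
  rw [Nat.card_eq_fintype_card, Fintype.card_subtype_compl, card_injective_fun, Fintype.card_fun,
    Fintype.card_fin, Fintype.card_fin, Nat.sub_add_cancel (Nat.descFactorial_le_pow k N)]

lemma tendsto_descFactorial_div_pow (N : ℕ) :
    Tendsto (fun k : ℕ => (k.descFactorial N : ℝ) / k ^ N) atTop (𝓝 1) :=
  (Asymptotics.isEquivalent_iff_tendsto_one
    (eventually_gt_atTop 0 |>.mono fun _ hk => by positivity)).mp
    (isEquivalent_descFactorial N)

lemma tendsto_card_not_injective_div_pow (N : ℕ) :
    Tendsto (fun k : ℕ => (Nat.card {w : Fin N → Fin k // ¬ Function.Injective w} : ℝ) / k ^ N)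
      atTop (𝓝 0) := by
  have h := (tendsto_const_nhds (x := (1 : ℝ))).sub (tendsto_descFactorial_div_pow N)
  rw [sub_self] at h
  refine h.congr' ?_
  filter_upwards [eventually_gt_atTop 0] with k hk
  have hpow : (k : ℝ) ^ N ≠ 0 := by positivity
  rw [eq_div_iff hpow, sub_mul, one_mul, div_mul_cancel₀ _ hpow, sub_eq_iff_eq_add,
    ← Nat.cast_pow, ← card_not_injective_add_descFactorial N k, Nat.cast_add]

lemma FD_eq_FP_mul_add (n N k : ℕ) : FD n k N = FP n N * (k.descFactorial N / k ^ N) +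
    Nat.card {w : Fin N → Fin k // ¬ Function.Injective w ∧ decLen w ≤ n} / k ^ N := by
  rw [FD, FP, card_decLen_le, card_injective_decLen_le, Nat.descFactorial_eq_factorial_mul_choose,
    Nat.cast_add, add_div]
  push_cast
  field_simp

theorem FD_tendsto_FP (n N : ℕ) :
    Filter.Tendsto (fun k : ℕ => FD n k N) Filter.atTop (𝓝 (FP n N)) := by
  have hnoninj : Tendsto (fun k : ℕ => (Nat.card {w : Fin N → Fin k //
      ¬ Function.Injective w ∧ decLen w ≤ n} : ℝ) / k ^ N) atTop (𝓝 0) := by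
    refine tendsto_of_tendsto_of_tendsto_of_le_of_le tendsto_const_nhds
      (tendsto_card_not_injective_div_pow N) (fun k => by positivity) fun k => ?_
    gcongr
    exact Nat.card_le_card_of_injective _
      (Subtype.impEmbedding _ _ fun _ hw => hw.1).injective
  simpa only [FD_eq_FP_mul_add, mul_one, add_zero] using
    ((tendsto_descFactorial_div_pow N).const_mul (FP n N)).add hnoninj
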